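/- Let 1 ≤ k ≤ n−1 be integers. Then d_{n,k} ≥ κ_n² / (4ⁿ · δ_L(Bⁿ)). -/

import Mathlib

open scoped Pointwise
open MeasureTheory RealInnerProductSpace

noncomputable section

/-- Euclidean `n`-space. -/
abbrev Euc (n : ℕ) : Type := EuclideanSpace ℝ (Fin n)

/-- The (full-rank, when `b` is linearly independent) lattice generated by `b`. -/
def latticeOf {n : ℕ} (b : Fin n → Euc n) : Set (Euc n) :=
  { x | ∃ c : Fin n → ℤ, x = ∑ i, (c i : ℝ) • b i }

/-- Covolume (absolute determinant) of the lattice generated by `b`. -/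
def covol {n : ℕ} (b : Fin n → Euc n) : ℝ :=
  |Matrix.det (Matrix.of fun i j => b i j)|

/-- A convex body: convex, compact, with nonempty interior. -/
def IsConvexBody {n : ℕ} (K : Set (Euc n)) : Prop :=
  Convex ℝ K ∧ IsCompact K ∧ (interior K).Nonempty

/-- The lattice `L` of translates of `K` is `k`-impassable: every `k`-dimensional affine
subspace of `ℝⁿ` meets some translate `x + K`, `x ∈ L`. -/
def IsImpassable {n : ℕ} (k : ℕ) (K L : Set (Euc n)) : Prop :=
  ∀ (W : Submodule ℝ (Euc n)) (v : Euc n), Module.finrank ℝ W = k →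
    ∃ x ∈ L, ((v +ᵥ (W : Set (Euc n))) ∩ (x +ᵥ K)).Nonempty

/-- `d_{n,k}(K)`: the infimum of densities of `k`-impassable lattices of translates of `K`. -/
def dImp (n k : ℕ) (K : Set (Euc n)) : ℝ :=
  sInf { d : ℝ | ∃ b : Fin n → Euc n, LinearIndependent ℝ b ∧
    IsImpassable k K (latticeOf b) ∧ d = (volume K).toReal / covol b }

/-- The closed unit ball `Bⁿ`. -/
def unitBall (n : ℕ) : Set (Euc n) := Metric.closedBall 0 1

/-- `κ_n`, the volume of the unit ball. -/
def ballVol (n : ℕ) : ℝ := (volume (unitBall n)).toReal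

/-- `d_{n,k} = d_{n,k}(Bⁿ)`. -/
def dImpBall (n k : ℕ) : ℝ := dImp n k (unitBall n)

/-- The lattice generated by `b` gives a lattice packing of translates of `K`. -/
def IsLatticePacking {n : ℕ} (K : Set (Euc n)) (b : Fin n → Euc n) : Prop :=
  LinearIndependent ℝ b ∧
    (latticeOf b).Pairwise fun x y => Disjoint (interior (x +ᵥ K)) (interior (y +ᵥ K))

/-- `δ_L(K)`: density of the densest lattice packing by translates of `K`. -/
def packingDensity (n : ℕ) (K : Set (Euc n)) : ℝ :=
  sSup { d : ℝ | ∃ b : Fin n → Euc n, IsLatticePacking K b ∧ d = (volume K).toReal / covol b }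

/-- `ϑ_L(Bᵐ)`: density of the thinnest lattice covering of `ℝᵐ` by unit balls. -/
def coveringDensityBall (m : ℕ) : ℝ :=
  sInf { d : ℝ | ∃ b : Fin m → Euc m, LinearIndependent ℝ b ∧
    (⋃ x ∈ latticeOf b, x +ᵥ unitBall m) = Set.univ ∧ d = ballVol m / covol b }

/-- The `k`-dimensional covolume of the sublattice spanned by `c` (square root of the
Gram determinant). -/
def subCovol {n k : ℕ} (c : Fin k → Euc n) : ℝ :=
  Real.sqrt |Matrix.det (Matrix.of fun i j => (⟪c i, c j⟫ : ℝ))|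

/-- `D_k(L)`: minimum of the `k`-dimensional covolumes of `k`-dimensional sublattices
of the lattice generated by `b`. -/
def Dk (n k : ℕ) (b : Fin n → Euc n) : ℝ :=
  sInf { d : ℝ | ∃ c : Fin k → Euc n, LinearIndependent ℝ c ∧
    (∀ i, c i ∈ latticeOf b) ∧ d = subCovol c }

/-- `c_{n,k}`: least constant `c > 0` with `D_k(L) ≤ c · D(L)^{k/n}` for all full-rank `L`. -/
def cConst (n k : ℕ) : ℝ :=
  sInf { c : ℝ | 0 < c ∧ ∀ b : Fin n → Euc n, LinearIndependent ℝ b →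
    Dk n k b ≤ c * covol b ^ ((k : ℝ) / (n : ℝ)) }

/-- A zonotope: a finite Minkowski sum of segments. -/
def IsZonotope {n : ℕ} (K : Set (Euc n)) : Prop :=
  ∃ (m : ℕ) (a c : Fin m → Euc n), K = ∑ i : Fin m, segment ℝ (a i) (c i)

/-- A zonoid: a convex body that is a Hausdorff limit of zonotopes. -/
def IsZonoid {n : ℕ} (K : Set (Euc n)) : Prop :=
  IsConvexBody K ∧ ∃ Z : ℕ → Set (Euc n), (∀ j, IsZonotope (Z j)) ∧
    Filter.Tendsto (fun j => Metric.hausdorffDist (Z j) K) Filter.atTop (nhds 0)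

/-- The polar body `K* = {y | ⟨x,y⟩ ≤ 1 for all x ∈ K}`. -/
def polarBody {n : ℕ} (K : Set (Euc n)) : Set (Euc n) :=
  { y | ∀ x ∈ K, (⟪x, y⟫ : ℝ) ≤ 1 }

/-- A cross-polytope: a bijective affine image of `conv{±e₁, …, ±e_n}`. -/
def IsCrossPolytope {n : ℕ} (K : Set (Euc n)) : Prop :=
  ∃ f : Euc n →ᵃ[ℝ] Euc n, Function.Bijective f ∧
    K = f '' convexHull ℝ
      (⋃ i : Fin n, ({EuclideanSpace.single i (1 : ℝ),
        -EuclideanSpace.single i (1 : ℝ)} : Set (Euc n)))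

/-- Symmetry with respect to all coordinate hyperplanes. -/
def SymmCoordHyperplanes {n : ℕ} (K : Set (Euc n)) : Prop :=
  ∀ x ∈ K, ∀ ε : Fin n → ℝ, (∀ i, ε i = 1 ∨ ε i = -1) →
    (show Euc n from WithLp.toLp 2 fun i => ε i * x i) ∈ K

/-- The central symmetral `(K - K)/2`. -/
def halfDiff {n : ℕ} (K : Set (Euc n)) : Set (Euc n) := (2⁻¹ : ℝ) • (K - K)

/-- A line through `v` with direction `d`. -/
def lineThrough {n : ℕ} (v d : Euc n) : Set (Euc n) := { p | ∃ t : ℝ, p = v + t • d }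

/-- The open infinite circular cylinder of radius `r` around the line through `v`
with direction `d`: points at distance `< r` from the line. -/
def openCylinder {n : ℕ} (v d : Euc n) (r : ℝ) : Set (Euc n) :=
  { p | Metric.infDist p (lineThrough v d) < r }

/-! If a lattice `L` is `k`-impassable with `k < n`, every nonzero vector `w` of the dual lattice
`L*` has length at least `1/2`: otherwise the hyperplane `⟪w, ·⟫ = 1/2` contains a `k`-flat, which
must meet some ball `x + Bⁿ` with `x ∈ L`; but `⟪w, x⟫ ∈ ℤ`, so that ball lies at distance at least
`1 / (2‖w‖) > 1` from the hyperplane. Hence `4 L*` is a lattice packing of unit balls, of covolume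
`4ⁿ / D(L)`, so `κ_n D(L) / 4ⁿ ≤ δ_L(Bⁿ)`, which rearranges to the bound. -/

section

open Module Submodule

variable {n : ℕ}

lemma latticeOf_eq_span (b : Fin n → Euc n) :
    latticeOf b = span ℤ (Set.range b) := by
  ext x
  simp [latticeOf, mem_span_range_iff_exists_fun, eq_comm, Int.cast_smul_eq_zsmul]

lemma latticeOf_smul (t : ℝ) (b : Fin n → Euc n) :
    latticeOf (t • b) = t • latticeOf b := by
  ext x
  simp only [latticeOf, Set.mem_smul_set, Pi.smul_apply]
  constructor
  · rintro ⟨c, rfl⟩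
    exact ⟨_, ⟨c, rfl⟩, by simp [Finset.smul_sum, smul_comm t]⟩
  · rintro ⟨_, ⟨c, rfl⟩, rfl⟩
    exact ⟨c, by simp [Finset.smul_sum, smul_comm t]⟩

lemma vadd_unitBall (x : Euc n) : x +ᵥ unitBall n = Metric.closedBall x 1 := by
  rw [unitBall, vadd_closedBall_zero]

lemma covol_smul (t : ℝ) (b : Fin n → Euc n) : covol (t • b) = |t| ^ n * covol b := by
  have h : (Matrix.of fun i j => (t • b) i j) = t • Matrix.of fun i j => b i j := by
    ext i j; rfl
  rw [covol, h, Matrix.det_smul, abs_mul, abs_pow, Fintype.card_fin, covol]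

lemma ballVol_pos (n : ℕ) : 0 < ballVol n :=
  ENNReal.toReal_pos (Metric.measure_closedBall_pos volume 0 one_pos).ne'
    (isCompact_closedBall 0 1).measure_lt_top.ne

lemma isUnit_of_linearIndependent {b : Fin n → Euc n} (hb : LinearIndependent ℝ b) :
    IsUnit (Matrix.of fun i j => b i j) := by
  rw [← Matrix.linearIndependent_rows_iff_isUnit]
  exact hb.map' (WithLp.linearEquiv 2 ℝ (Fin n → ℝ)).toLinearMap (LinearEquiv.ker _)

lemma covol_pos {b : Fin n → Euc n} (hb : LinearIndependent ℝ b) : 0 < covol b :=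
  abs_pos.2 ((Matrix.isUnit_iff_isUnit_det _).1 (isUnit_of_linearIndependent hb)).ne_zero

lemma isImpassable_of_forall_mem_vadd {k : ℕ} {K L : Set (Euc n)}
    (h : ∀ v, ∃ x ∈ L, v ∈ x +ᵥ K) : IsImpassable k K L := fun W v _ =>
  (h v).imp fun _ ⟨hxL, hv⟩ => ⟨hxL, v, ⟨0, W.zero_mem, add_zero v⟩, hv⟩

lemma exists_mem_latticeOf_norm_sub_le (b : Module.Basis (Fin n) ℝ (Euc n)) (v : Euc n) :
    ∃ x ∈ latticeOf b, ‖v - x‖ ≤ ∑ i, ‖b i‖ :=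
  ⟨ZSpan.floor b v, by rw [latticeOf_eq_span]; exact (ZSpan.floor b v).2, ZSpan.norm_fract_le b v⟩

lemma exists_isImpassable_unitBall (k : ℕ) :
    ∃ b : Fin n → Euc n, LinearIndependent ℝ b ∧ IsImpassable k (unitBall n) (latticeOf b) := by
  have ht : (0 : ℝ) < ((n : ℝ) + 1)⁻¹ := by positivity
  let e := (EuclideanSpace.basisFun (Fin n) ℝ).toBasis.isUnitSMul
    (w := fun _ => ((n : ℝ) + 1)⁻¹) fun _ => ht.ne'.isUnit
  refine ⟨e, e.linearIndependent, isImpassable_of_forall_mem_vadd fun v => ?_⟩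
  obtain ⟨x, hx, hvx⟩ := exists_mem_latticeOf_norm_sub_le e v
  refine ⟨x, hx, ?_⟩
  rw [vadd_unitBall, Metric.mem_closedBall, dist_eq_norm]
  refine hvx.trans ?_
  simp only [e, Module.Basis.isUnitSMul_apply, OrthonormalBasis.coe_toBasis,
    EuclideanSpace.basisFun_apply, norm_smul, norm_inv, Real.norm_eq_abs, PiLp.norm_single,
    norm_one, mul_one, Finset.sum_const, Finset.card_univ, Fintype.card_fin, nsmul_eq_mul]
  rw [abs_of_pos (by positivity), ← div_eq_mul_inv, div_le_one (by positivity)]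
  linarith

lemma exists_dual_basis {b : Fin n → Euc n} (hb : LinearIndependent ℝ b) :
    ∃ u : Fin n → Euc n, (∀ i j, ⟪u i, b j⟫ = if i = j then 1 else 0) ∧
      covol u = (covol b)⁻¹ := by
  set M : Matrix (Fin n) (Fin n) ℝ := Matrix.of fun i j => b i j
  have hM : IsUnit M.det := (Matrix.isUnit_iff_isUnit_det _).1 (isUnit_of_linearIndependent hb)
  refine ⟨fun i => WithLp.toLp 2 fun j => M⁻¹ j i, fun i j => ?_, ?_⟩
  · have h : (M * M⁻¹) j i = if i = j then 1 else 0 := by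
      simp [Matrix.mul_nonsing_inv M hM, Matrix.one_apply, eq_comm]
    rw [← h, Matrix.mul_apply]
    simp [PiLp.inner_apply, M]
  · have h : (Matrix.of fun i j => (WithLp.toLp 2 fun j => M⁻¹ j i : Euc n) j) =
        Matrix.transpose M⁻¹ := rfl
    rw [covol, h, Matrix.det_transpose, Matrix.det_nonsing_inv, Ring.inverse_eq_inv, abs_inv,
      covol]

lemma linearIndependent_of_inner_eq_ite {u b : Fin n → Euc n}
    (hpair : ∀ i j, ⟪u i, b j⟫ = if i = j then 1 else 0) : LinearIndependent ℝ u := by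
  rw [Fintype.linearIndependent_iff]
  intro g hg j
  simpa [sum_inner, real_inner_smul_left, hpair] using congrArg (⟪·, b j⟫) hg

lemma exists_int_inner_eq {u b : Fin n → Euc n}
    (hpair : ∀ i j, ⟪u i, b j⟫ = if i = j then 1 else 0) {w x : Euc n}
    (hw : w ∈ latticeOf u) (hx : x ∈ latticeOf b) : ∃ m : ℤ, ⟪w, x⟫ = m := by
  obtain ⟨a, rfl⟩ := hw
  obtain ⟨c, rfl⟩ := hx
  exact ⟨∑ i, a i * c i, by
    simp [sum_inner, inner_sum, real_inner_smul_left, real_inner_smul_right, hpair, mul_comm]⟩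

lemma Submodule.exists_le_finrank_eq {K E : Type*} [Field K] [AddCommGroup E] [Module K E]
    (V : Submodule K E) {k : ℕ} (hk : k ≤ finrank K V) : ∃ W ≤ V, finrank K W = k := by
  obtain ⟨f, hf⟩ := exists_linearIndependent_of_le_finrank hk
  refine ⟨span K (Set.range (V.subtype ∘ f)), span_le.2 (Set.range_subset_iff.2 fun i => (f i).2),
    ?_⟩
  rw [finrank_span_eq_card (hf.map' V.subtype V.ker_subtype), Fintype.card_fin]

lemma half_le_abs_half_sub_intCast (m : ℤ) : (1 / 2 : ℝ) ≤ |1 / 2 - (m : ℝ)| := by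
  rcases le_or_gt m 0 with h | h
  · have : (m : ℝ) ≤ 0 := by exact_mod_cast h
    rw [abs_of_nonneg (by linarith)]
    linarith
  · have : (1 : ℝ) ≤ m := by exact_mod_cast h
    rw [abs_of_nonpos (by linarith)]
    linarith

lemma half_le_norm_of_isImpassable {k : ℕ} (hkn : k ≤ n - 1) {L : Set (Euc n)}
    (hL : IsImpassable k (unitBall n) L) {w : Euc n} (hw : ∀ x ∈ L, ∃ m : ℤ, ⟪w, x⟫ = m)
    (hw0 : w ≠ 0) : 1 / 2 ≤ ‖w‖ := by
  have hfr : finrank ℝ (ℝ ∙ w)ᗮ = n - 1 := by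
    have := (ℝ ∙ w).finrank_add_finrank_orthogonal
    rw [finrank_span_singleton hw0, finrank_euclideanSpace_fin] at this
    omega
  obtain ⟨W, hWw, hWk⟩ := (ℝ ∙ w)ᗮ.exists_le_finrank_eq (hfr ▸ hkn)
  have hw2 : ‖w‖ ^ 2 ≠ 0 := by positivity
  obtain ⟨x, hxL, p, ⟨y, hyW, hyp⟩, hpx⟩ := hL W ((2 * ‖w‖ ^ 2)⁻¹ • w) hWk
  obtain ⟨m, hm⟩ := hw x hxL
  have hwp : ⟪w, p⟫ = 1 / 2 := by
    rw [← show (2 * ‖w‖ ^ 2)⁻¹ • w + y = p from hyp, inner_add_right, real_inner_smul_right,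
      real_inner_self_eq_norm_sq,
      inner_right_of_mem_orthogonal (mem_span_singleton_self w) (hWw hyW), add_zero]
    field_simp
  rw [vadd_unitBall, Metric.mem_closedBall, dist_eq_norm] at hpx
  calc 1 / 2 ≤ |1 / 2 - (m : ℝ)| := half_le_abs_half_sub_intCast m
    _ = |⟪w, p - x⟫| := by rw [inner_sub_right, hwp, hm]
    _ ≤ ‖w‖ * ‖p - x‖ := abs_real_inner_le_norm _ _
    _ ≤ ‖w‖ := mul_le_of_le_one_right (norm_nonneg w) hpx

lemma isLatticePacking_unitBall_of_two_le_norm {b : Fin n → Euc n} (hb : LinearIndependent ℝ b)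
    (h : ∀ z ∈ latticeOf b, z ≠ 0 → 2 ≤ ‖z‖) : IsLatticePacking (unitBall n) b := by
  refine ⟨hb, fun x hx y hy hxy => ?_⟩
  change Disjoint (interior (x +ᵥ unitBall n)) (interior (y +ᵥ unitBall n))
  rw [vadd_unitBall, vadd_unitBall, interior_closedBall _ one_ne_zero,
    interior_closedBall _ one_ne_zero]
  refine Metric.ball_disjoint_ball ?_
  rw [one_add_one_eq_two, dist_eq_norm]
  rw [latticeOf_eq_span] at hx hy h
  exact h _ (sub_mem hx hy) (sub_ne_zero.2 hxy)

lemma ballVol_mul_covol_le_of_isImpassable {k : ℕ} (hkn : k ≤ n - 1) {b : Fin n → Euc n}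
    (hb : LinearIndependent ℝ b) (himp : IsImpassable k (unitBall n) (latticeOf b))
    (hδ : 0 < packingDensity n (unitBall n)) :
    ballVol n * covol b ≤ 4 ^ n * packingDensity n (unitBall n) := by
  obtain ⟨u, hpair, hcovol⟩ := exists_dual_basis hb
  have hpack : IsLatticePacking (unitBall n) ((4 : ℝ) • u) := by
    refine isLatticePacking_unitBall_of_two_le_norm
      ((linearIndependent_of_inner_eq_ite hpair).units_smul fun _ => Units.mk0 4 four_ne_zero) ?_
    rw [latticeOf_smul]
    rintro _ ⟨w, hw, rfl⟩ hw0
    have := half_le_norm_of_isImpassable hkn himp (fun x hx => exists_int_inner_eq hpair hw hx)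
      (by rintro rfl; exact hw0 (smul_zero _))
    rw [norm_smul, Real.norm_of_nonneg zero_le_four]
    linarith
  have hbdd : BddAbove {d | ∃ b, IsLatticePacking (unitBall n) b ∧
      d = (volume (unitBall n)).toReal / covol b} := by
    by_contra h
    -- `sSup` of a real set that is not bounded above is `0`
    rw [packingDensity, Real.sSup_of_not_bddAbove h] at hδ
    exact hδ.false
  have hle : ballVol n / covol ((4 : ℝ) • u) ≤ packingDensity n (unitBall n) :=
    le_csSup hbdd ⟨_, hpack, rfl⟩
  have hD := covol_pos hb
  rw [covol_smul, hcovol, abs_of_pos four_pos, div_le_iff₀ (by positivity)] at hle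
  calc ballVol n * covol b ≤ packingDensity n (unitBall n) * (4 ^ n * (covol b)⁻¹) * covol b :=
        mul_le_mul_of_nonneg_right hle hD.le
    _ = 4 ^ n * packingDensity n (unitBall n) := by field_simp

end

theorem stmt_5_general (n k : ℕ) (hkn : k ≤ n - 1) :
    dImpBall n k ≥ ballVol n ^ 2 / (4 ^ n * packingDensity n (unitBall n)) := by
  rcases le_or_gt (packingDensity n (unitBall n)) 0 with hδ | hδ
  · have hd : 0 ≤ dImpBall n k := Real.sInf_nonneg fun _ ⟨_, _, _, hd⟩ =>
      hd ▸ div_nonneg ENNReal.toReal_nonneg (abs_nonneg _)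
    exact (div_nonpos_of_nonneg_of_nonpos (sq_nonneg _)
      (mul_nonpos_of_nonneg_of_nonpos (by positivity) hδ)).trans hd
  · obtain ⟨b₀, hb₀, himp₀⟩ := exists_isImpassable_unitBall (n := n) k
    refine le_csInf ⟨_, b₀, hb₀, himp₀, rfl⟩ ?_
    rintro _ ⟨b, hb, himp, rfl⟩
    change _ ≤ ballVol n / covol b
    have hκ := ballVol_pos n
    have hD := covol_pos hb
    have := ballVol_mul_covol_le_of_isImpassable hkn hb himp hδ
    rw [div_le_div_iff₀ (by positivity) hD]
    nlinarith

/-- For `1 ≤ k ≤ n-1`, `d_{n,k} ≥ κ_n² / (4ⁿ · δ_L(Bⁿ))`. -/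
theorem stmt_5 (n k : ℕ) (hk : 1 ≤ k) (hkn : k ≤ n - 1) :
    dImpBall n k ≥ ballVol n ^ 2 / (4 ^ n * packingDensity n (unitBall n)) :=
  stmt_5_general n k hkn
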